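/- Let T > 0 and let A : [0,T] → Matrix(N×N,ℝ) be continuous with nonnegative off-diagonal entries and nonpositive row sums for every t. Let F : [0,T] → ℝ^N be continuous and let u : [0,T] → ℝ^N be differentiable with u'(t) = A(t)u(t) + F(t). Then for all t ∈ [0,T], ‖u(t)‖_∞ ≤ ‖u(0)‖_∞ + ∫₀^t ‖F(s)‖_∞ ds. -/

import Mathlib

/-!
For `h ≥ 0` small, `1 + h • A t` is entrywise nonnegative with row sums at most `1`, so the
explicit Euler step `v ↦ v + h • A t *ᵥ v` does not increase the sup norm. Comparing `u (t + h)`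
with its Euler approximation then shows that the right upper Dini derivative of `t ↦ ‖u t‖` is
at most `‖F t‖`, and the comparison principle for Dini derivatives bounds `‖u t‖` by the
solution `‖u 0‖ + ∫₀ᵗ ‖F‖` of the majorant equation.
-/

open Set Filter Topology

namespace Matrix

variable {ι : Type*} [Fintype ι]

structure IsSubMarkovGenerator (A : Matrix ι ι ℝ) : Prop where
  offDiag_nonneg : ∀ i j, i ≠ j → 0 ≤ A i j
  rowSum_nonpos : ∀ i, ∑ j, A i j ≤ 0

theorem norm_mulVec_le_of_nonneg_of_rowSum_le_one {m : Type*} [Fintype m] {M : Matrix m ι ℝ}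
    (hM : ∀ i j, 0 ≤ M i j) (hrow : ∀ i, ∑ j, M i j ≤ 1) (v : ι → ℝ) : ‖M *ᵥ v‖ ≤ ‖v‖ := by
  refine (pi_norm_le_iff_of_nonneg (norm_nonneg v)).2 fun i => ?_
  calc ‖(M *ᵥ v) i‖ = ‖∑ j, M i j * v j‖ := rfl
    _ ≤ ∑ j, M i j * ‖v‖ := by
        refine (norm_sum_le _ _).trans (Finset.sum_le_sum fun j _ => ?_)
        rw [norm_mul, Real.norm_of_nonneg (hM i j)]
        exact mul_le_mul_of_nonneg_left (norm_le_pi_norm v j) (hM i j)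
    _ = (∑ j, M i j) * ‖v‖ := Finset.sum_mul _ _ _ |>.symm
    _ ≤ ‖v‖ := mul_le_of_le_one_left (norm_nonneg v) (hrow i)

theorem IsSubMarkovGenerator.norm_add_smul_mulVec_le {A : Matrix ι ι ℝ}
    (hA : A.IsSubMarkovGenerator) {h : ℝ} (hh : 0 ≤ h) (hdiag : ∀ i, 0 ≤ 1 + h * A i i)
    (v : ι → ℝ) : ‖v + h • A *ᵥ v‖ ≤ ‖v‖ := by
  classical
  have hstep : v + h • A *ᵥ v = (1 + h • A) *ᵥ v := by
    rw [add_mulVec, one_mulVec, smul_mulVec]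
  rw [hstep]
  refine norm_mulVec_le_of_nonneg_of_rowSum_le_one (fun i j => ?_) (fun i => ?_) v
  · rcases eq_or_ne i j with rfl | hij
    · simpa using hdiag i
    · simpa [one_apply_ne hij] using mul_nonneg hh (hA.offDiag_nonneg i j hij)
  · simp only [add_apply, smul_apply, smul_eq_mul, Finset.sum_add_distrib, ← Finset.mul_sum,
      one_apply, Finset.sum_ite_eq, Finset.mem_univ, if_true]
    linarith [mul_nonpos_of_nonneg_of_nonpos hh (hA.rowSum_nonpos i)]

theorem IsSubMarkovGenerator.eventually_slope_norm_lt {A : Matrix ι ι ℝ}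
    (hA : A.IsSubMarkovGenerator) {u : ℝ → ι → ℝ} {w : ι → ℝ} {x : ℝ}
    (hu : HasDerivWithinAt u (A *ᵥ u x + w) (Ioi x) x) {r : ℝ} (hr : ‖w‖ < r) :
    ∀ᶠ z in 𝓝[>] x, slope (fun t => ‖u t‖) x z < r := by
  obtain ⟨c, hc, hcr⟩ : ∃ c, 0 < c ∧ ‖w‖ + c < r := ⟨(r - ‖w‖) / 2, by linarith, by linarith⟩
  have hTaylor : ∀ᶠ z in 𝓝[>] x, ‖u z - u x - (z - x) • (A *ᵥ u x + w)‖ ≤ c * ‖z - x‖ :=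
    hu.isLittleO.def hc
  have hdiag : ∀ᶠ z in 𝓝[>] x, ∀ i, 0 ≤ 1 + (z - x) * A i i := by
    refine nhdsWithin_le_nhds (eventually_all.2 fun i => ?_)
    have hcont : ContinuousAt (fun z : ℝ => 1 + (z - x) * A i i) x := by fun_prop
    exact (hcont.eventually (eventually_gt_nhds (by simp))).mono fun z hz => hz.le
  filter_upwards [hTaylor, hdiag, self_mem_nhdsWithin] with z hz hzdiag (hxz : x < z)
  have hzx : 0 < z - x := sub_pos.2 hxz
  have hnorm : ‖u z‖ ≤ ‖u x‖ + (z - x) * ‖w‖ + c * (z - x) :=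
    calc ‖u z‖ = ‖(u x + (z - x) • A *ᵥ u x) + (z - x) • w
          + (u z - u x - (z - x) • (A *ᵥ u x + w))‖ := by
          congr 1; rw [smul_add]; abel
      _ ≤ ‖u x + (z - x) • A *ᵥ u x‖ + ‖(z - x) • w‖
          + ‖u z - u x - (z - x) • (A *ᵥ u x + w)‖ := norm_add₃_le
      _ ≤ ‖u x‖ + (z - x) * ‖w‖ + c * (z - x) := by
          rw [norm_smul, Real.norm_of_nonneg hzx.le]
          have hcz : c * ‖z - x‖ = c * (z - x) := by rw [Real.norm_of_nonneg hzx.le]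
          linarith [hA.norm_add_smul_mulVec_le hzx.le hzdiag (u x)]
  rw [slope_def_field, div_lt_iff₀ hzx]
  nlinarith

end Matrix

theorem ContinuousOn.hasDerivWithinAt_integral_Icc {g : ℝ → ℝ} {a b x : ℝ}
    (hg : ContinuousOn g (Icc a b)) (hx : x ∈ Icc a b) :
    HasDerivWithinAt (fun y => ∫ s in a..y, g s) (g x) (Icc a b) x := by
  -- the `Fact` provides the `FTCFilter` instance for one-sided derivatives within `Icc a b`
  have : Fact (x ∈ Icc a b) := ⟨hx⟩
  refine intervalIntegral.integral_hasDerivWithinAt_right ?_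
    (hg.stronglyMeasurableAtFilter_nhdsWithin measurableSet_Icc x) (hg x hx)
  exact (hg.mono (uIcc_subset_Icc (left_mem_Icc.2 (hx.1.trans hx.2)) hx)).intervalIntegrable

theorem le_add_integral_of_frequently_slope_lt {f g : ℝ → ℝ} {a b : ℝ}
    (hf : ContinuousOn f (Icc a b)) (hg : ContinuousOn g (Icc a b))
    (hslope : ∀ x ∈ Ico a b, ∀ r, g x < r → ∃ᶠ z in 𝓝[>] x, slope f x z < r) :
    ∀ x ∈ Icc a b, f x ≤ f a + ∫ s in a..x, g s := by
  have hB : ∀ x ∈ Icc a b,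
      HasDerivWithinAt (fun y => f a + ∫ s in a..y, g s) (g x) (Icc a b) x :=
    fun x hx => (hg.hasDerivWithinAt_integral_Icc hx).const_add _
  refine fun x hx => image_le_of_liminf_slope_right_le_deriv_boundary hf (by simp)
    (fun y hy => (hB y hy).continuousWithinAt) (fun y hy => ?_) hslope hx
  exact (hB y (Ico_subset_Icc_self hy)).mono_of_mem_nhdsWithin (Icc_mem_nhdsGE_of_mem hy)

theorem stmt_15 (N : ℕ) (T : ℝ)
    (A : ℝ → Matrix (Fin N) (Fin N) ℝ) (F : ℝ → Fin N → ℝ)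
    (hMetzler : ∀ t ∈ Set.Icc (0:ℝ) T, ∀ i j, i ≠ j → 0 ≤ A t i j)
    (hrow : ∀ t ∈ Set.Icc (0:ℝ) T, ∀ i, ∑ j, A t i j ≤ 0)
    (hFcont : ContinuousOn F (Set.Icc 0 T))
    (u : ℝ → Fin N → ℝ)
    (hu : ∀ t ∈ Set.Icc (0:ℝ) T,
      HasDerivWithinAt u ((A t).mulVec (u t) + F t) (Set.Icc 0 T) t) :
    ∀ t ∈ Set.Icc (0:ℝ) T, ‖u t‖ ≤ ‖u 0‖ + ∫ s in (0:ℝ)..t, ‖F s‖ := by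
  refine le_add_integral_of_frequently_slope_lt (fun t ht => (hu t ht).continuousWithinAt.norm)
    hFcont.norm fun x hx r hr => ?_
  have hxI := Ico_subset_Icc_self hx
  have hA : (A x).IsSubMarkovGenerator := ⟨hMetzler x hxI, hrow x hxI⟩
  exact (hA.eventually_slope_norm_lt
    ((hu x hxI).mono_of_mem_nhdsWithin (Icc_mem_nhdsGT_of_mem hx)) hr).frequently
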